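/- Let G and G' be finite simple graphs. If for every natural number k the k-colouring graphs C_k(G) and C_k(G') are isomorphic, then G and G' are isomorphic. That is, the collection {C_k(G)}_{k ∈ ℕ} uniquely determines G up to isomorphism. -/

import Mathlib

open SimpleGraph

/-- The `k`-colouring graph of `G`: vertices are proper `k`-colourings of `G`,
two colourings being adjacent iff they differ at exactly one vertex. -/
def colGraph {V : Type*} (G : SimpleGraph V) (k : ℕ) :
    SimpleGraph (G.Coloring (Fin k)) where
  Adj c c' := ∃! v, c v ≠ c' v
  symm := by
    constructor
    rintro c c' ⟨v, hv, hu⟩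
    exact ⟨v, hv.symm, fun w hw => hu w hw.symm⟩
  loopless := by
    constructor
    rintro c ⟨v, hv, -⟩
    exact hv rfl

/-- The generalised chromatic polynomial `π_G^(H)(k)`: the number of vertex subsets of
the `k`-colouring graph of `G` that induce a subgraph isomorphic to `H`. -/
noncomputable def piHG {V W : Type*} (G : SimpleGraph V) (H : SimpleGraph W) (k : ℕ) : ℕ :=
  Nat.card {S : Set (G.Coloring (Fin k)) //
    Nonempty (((colGraph G k).induce S) ≃g H)}

/-!
Take `k > |V| + |V'|`, a `k`-colouring `c` of `G` and an isomorphism `ψ : C_k(G) ≃ C_k(G')`.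
The neighbours of `c` in `C_k(G)` are the recolourings of `c` at a single vertex, and two of
them recolour the same vertex iff they are equal or adjacent. Since `ψ` preserves this relation,
it induces a bijection `V → V'`. Recolouring with a colour that `c` does not use, the
recolourings at `v` and at `w` have `c` as their only common neighbour exactly when `v ~ w`,
and this too is preserved by `ψ`. As `ψ c` also misses a colour, the same works for `ψ⁻¹`.
-/

open Function

section DiffersOnlyAt

variable {α β : Type*}

def DiffersOnlyAt (f g : α → β) (a : α) : Prop :=
  f a ≠ g a ∧ ∀ b ≠ a, f b = g b

variable {f g : α → β} {a b : α}

theorem DiffersOnlyAt.unique (ha : DiffersOnlyAt f g a) (hb : DiffersOnlyAt f g b) : a = b :=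
  by_contra fun hab => ha.1 (hb.2 a hab)

theorem differsOnlyAt_update [DecidableEq α] {x : β} (h : f a ≠ x) :
    DiffersOnlyAt f (update f a x) a :=
  ⟨by simpa using h, fun _ hb => (update_of_ne hb x f).symm⟩

end DiffersOnlyAt

theorem exists_forall_ne_of_card_lt {α β : Type*} [Fintype α] [Fintype β]
    (h : Fintype.card α < Fintype.card β) (f : α → β) : ∃ b, ∀ a, f a ≠ b := by
  by_contra! hf
  exact (Fintype.card_le_of_surjective f fun b => hf b).not_gt h

section Recolour

variable {U β : Type*} [DecidableEq U] {H : SimpleGraph U}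

def SimpleGraph.Coloring.recolour (c : H.Coloring β) (v : U) (x : β)
    (h : ∀ u, H.Adj v u → c u ≠ x) : H.Coloring β :=
  Coloring.mk (update c v x) fun {a b} hab => by
    by_cases ha : a = v <;> by_cases hb : b = v <;>
      simp only [update_apply, ha, hb, if_true, if_false]
    · exact absurd (ha.trans hb.symm) hab.ne
    · exact (h b (ha ▸ hab)).symm
    · exact h a (hb ▸ hab.symm)
    · exact c.valid hab

@[simp]
theorem SimpleGraph.Coloring.coe_recolour (c : H.Coloring β) (v : U) (x : β)
    (h : ∀ u, H.Adj v u → c u ≠ x) : ⇑(c.recolour v x h) = update c v x :=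
  rfl

def SimpleGraph.Coloring.recolourFresh {c : H.Coloring β} {x : β} (hx : ∀ u, c u ≠ x) (v : U) :
    H.Coloring β :=
  c.recolour v x fun u _ => hx u

end Recolour

namespace colGraph

variable {U : Type*} {H : SimpleGraph U} {k : ℕ} {c c₁ c₂ : H.Coloring (Fin k)} {v w : U}

theorem adj_iff_exists_differsOnlyAt :
    (colGraph H k).Adj c₁ c₂ ↔ ∃ v, DiffersOnlyAt c₁ c₂ v :=
  ⟨fun ⟨v, hv, hu⟩ => ⟨v, hv, fun u => not_imp_comm.mp (hu u)⟩,
    fun ⟨v, hv, hu⟩ => ⟨v, hv, fun u => not_imp_comm.mp (hu u)⟩⟩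

theorem eq_or_adj_iff_of_differsOnlyAt (h₁ : DiffersOnlyAt c c₁ v) (h₂ : DiffersOnlyAt c c₂ w) :
    c₁ = c₂ ∨ (colGraph H k).Adj c₁ c₂ ↔ v = w := by
  constructor
  · intro h
    by_contra hvw
    have hv : c₁ v ≠ c₂ v := (h₂.2 v hvw).symm ▸ h₁.1.symm
    have hw : c₁ w ≠ c₂ w := h₁.2 w (Ne.symm hvw) ▸ h₂.1
    obtain rfl | ⟨x, -, hx⟩ := h
    · exact hv rfl
    · exact hvw ((hx v hv).trans (hx w hw).symm)
  · rintro rfl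
    have hagree : ∀ u ≠ v, c₁ u = c₂ u := fun u hu => (h₁.2 u hu).symm.trans (h₂.2 u hu)
    by_cases hv : c₁ v = c₂ v
    · refine .inl (DFunLike.ext _ _ fun u => ?_)
      obtain rfl | hu := eq_or_ne u v
      exacts [hv, hagree u hu]
    · exact .inr (adj_iff_exists_differsOnlyAt.mpr ⟨v, hv, hagree⟩)

theorem exists_common_neighbor_ne (hvw : ¬ H.Adj v w) (hne : v ≠ w)
    (h₁ : DiffersOnlyAt c c₁ v) (h₂ : DiffersOnlyAt c c₂ w) :
    ∃ d ≠ c, (colGraph H k).Adj c₁ d ∧ (colGraph H k).Adj c₂ d := by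
  classical
  have hfree : ∀ u, H.Adj w u → c₁ u ≠ c₂ w := fun u hu => by
    rw [← h₁.2 u fun huv => hvw (huv ▸ hu).symm, h₂.2 u hu.ne.symm]
    exact (c₂.valid hu).symm
  have hv : c₁ v ≠ c₂ v := h₂.2 v hne ▸ h₁.1.symm
  have hw : c₁ w ≠ c₂ w := h₁.2 w hne.symm ▸ h₂.1
  refine ⟨c₁.recolour w (c₂ w) hfree, fun hd => h₁.1 ?_, ?_, ?_⟩
  · rw [← hd, Coloring.coe_recolour, update_of_ne hne]
  · exact adj_iff_exists_differsOnlyAt.mpr ⟨w, differsOnlyAt_update hw⟩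
  · refine adj_iff_exists_differsOnlyAt.mpr ⟨v, ?_, fun u hu => ?_⟩
    · simpa [update_of_ne hne] using hv.symm
    · obtain rfl | huw := eq_or_ne u w
      · simp
      · simpa [update_of_ne huw] using ((h₁.2 u hu).symm.trans (h₂.2 u huw)).symm

section Fresh

variable [DecidableEq U] {α : Fin k} (hα : ∀ u, c u ≠ α)

theorem differsOnlyAt_recolourFresh (v : U) : DiffersOnlyAt c (Coloring.recolourFresh hα v) v :=
  differsOnlyAt_update (hα v)

theorem adj_recolourFresh (v : U) : (colGraph H k).Adj c (Coloring.recolourFresh hα v) :=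
  adj_iff_exists_differsOnlyAt.mpr ⟨v, differsOnlyAt_recolourFresh hα v⟩

theorem eq_off_of_adj_recolourFresh {d : H.Coloring (Fin k)}
    (hd : (colGraph H k).Adj d (Coloring.recolourFresh hα v)) (hdv : d v ≠ α) :
    ∀ u ≠ v, d u = c u := by
  obtain ⟨x, hx⟩ := adj_iff_exists_differsOnlyAt.mp hd
  obtain rfl : x = v := by_contra fun hxv => hdv (by
    simp [hx.2 v (Ne.symm hxv), Coloring.recolourFresh])
  intro u hu
  simp [hx.2 u hu, Coloring.recolourFresh, update_of_ne hu]

theorem eq_of_adj_recolourFresh_of_adj (hvw : H.Adj v w) {d : H.Coloring (Fin k)}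
    (hdv : (colGraph H k).Adj d (Coloring.recolourFresh hα v))
    (hdw : (colGraph H k).Adj d (Coloring.recolourFresh hα w)) : d = c := by
  -- `d` is proper, so it cannot give both ends of the edge `vw` the colour `α`.
  wlog hv : d v ≠ α generalizing v w
  · exact this hvw.symm hdw hdv fun hw => d.valid hvw ((not_not.mp hv).trans hw.symm)
  have hoffv := eq_off_of_adj_recolourFresh hα hdv hv
  have hoffw := eq_off_of_adj_recolourFresh hα hdw (hoffv w hvw.ne.symm ▸ hα w)
  refine DFunLike.ext _ _ fun u => ?_
  obtain rfl | hu := eq_or_ne u v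
  exacts [hoffw u hvw.ne, hoffv u hu]

end Fresh

section VertexMap

variable {U' : Type*} [DecidableEq U] {H' : SimpleGraph U'} (ψ : colGraph H k ≃g colGraph H' k)
  {α : Fin k} (hα : ∀ u, c u ≠ α)

noncomputable def vertexMap (v : U) : U' :=
  (adj_iff_exists_differsOnlyAt.mp (ψ.map_adj_iff.mpr (adj_recolourFresh hα v))).choose

theorem differsOnlyAt_vertexMap (v : U) :
    DiffersOnlyAt (ψ c) (ψ (Coloring.recolourFresh hα v)) (vertexMap ψ hα v) :=
  (adj_iff_exists_differsOnlyAt.mp (ψ.map_adj_iff.mpr (adj_recolourFresh hα v))).choose_spec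

theorem differsOnlyAt_vertexMap_of_differsOnlyAt (h : DiffersOnlyAt c c₁ v) :
    DiffersOnlyAt (ψ c) (ψ c₁) (vertexMap ψ hα v) := by
  obtain ⟨x, hx⟩ := adj_iff_exists_differsOnlyAt.mp
    (ψ.map_adj_iff.mpr (adj_iff_exists_differsOnlyAt.mpr ⟨v, h⟩))
  have hsame : ψ (Coloring.recolourFresh hα v) = ψ c₁ ∨
      (colGraph H' k).Adj (ψ (Coloring.recolourFresh hα v)) (ψ c₁) := by
    rw [ψ.injective.eq_iff, ψ.map_adj_iff, eq_or_adj_iff_of_differsOnlyAt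
      (differsOnlyAt_recolourFresh hα v) h]
  rwa [(eq_or_adj_iff_of_differsOnlyAt (differsOnlyAt_vertexMap ψ hα v) hx).mp hsame]

theorem vertexMap_injective : Injective (vertexMap ψ hα) := by
  intro v w hvw
  have hsame := (eq_or_adj_iff_of_differsOnlyAt (differsOnlyAt_vertexMap ψ hα v)
    (differsOnlyAt_vertexMap ψ hα w)).mpr hvw
  rw [ψ.injective.eq_iff, ψ.map_adj_iff] at hsame
  exact (eq_or_adj_iff_of_differsOnlyAt (differsOnlyAt_recolourFresh hα v)
    (differsOnlyAt_recolourFresh hα w)).mp hsame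

theorem adj_vertexMap (hvw : H.Adj v w) : H'.Adj (vertexMap ψ hα v) (vertexMap ψ hα w) := by
  by_contra hnadj
  obtain ⟨d, hdc, hdv, hdw⟩ := exists_common_neighbor_ne hnadj
    ((vertexMap_injective ψ hα).ne hvw.ne) (differsOnlyAt_vertexMap ψ hα v)
    (differsOnlyAt_vertexMap ψ hα w)
  rw [← ψ.apply_symm_apply d, ψ.map_adj_iff] at hdv hdw
  rw [← ψ.apply_symm_apply d, eq_of_adj_recolourFresh_of_adj hα hvw hdv.symm hdw.symm] at hdc
  exact hdc rfl

theorem vertexMap_symm_vertexMap [DecidableEq U'] {β : Fin k} (hβ : ∀ u, ψ c u ≠ β) (v : U) :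
    vertexMap ψ.symm hβ (vertexMap ψ hα v) = v := by
  have h := differsOnlyAt_vertexMap_of_differsOnlyAt ψ.symm hβ (differsOnlyAt_vertexMap ψ hα v)
  rw [ψ.symm_apply_apply, ψ.symm_apply_apply] at h
  exact h.unique (differsOnlyAt_recolourFresh hα v)

noncomputable def isoOfIso [DecidableEq U'] {β : Fin k} (hβ : ∀ u, ψ c u ≠ β) : H ≃g H' where
  toFun := vertexMap ψ hα
  invFun := vertexMap ψ.symm hβ
  left_inv := vertexMap_symm_vertexMap ψ hα hβ
  right_inv w := vertexMap_injective ψ.symm hβ (vertexMap_symm_vertexMap ψ hα hβ _)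
  map_rel_iff' {v w} := by
    change H'.Adj (vertexMap ψ hα v) (vertexMap ψ hα w) ↔ H.Adj v w
    refine ⟨fun h => ?_, adj_vertexMap ψ hα⟩
    simpa only [vertexMap_symm_vertexMap] using adj_vertexMap ψ.symm hβ h

end VertexMap

end colGraph

/-- The collection of all colouring graphs `{C_k(G)}_{k ∈ ℕ}` determines `G` up to
isomorphism. -/
theorem colouring_graphs_determine_graph {V V' : Type*} [Fintype V] [Fintype V']
    (G : SimpleGraph V) (G' : SimpleGraph V')
    (h : ∀ k : ℕ, Nonempty (colGraph G k ≃g colGraph G' k)) :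
    Nonempty (G ≃g G') := by
  classical
  obtain ⟨ψ⟩ := h (Fintype.card V + Fintype.card V' + 1)
  obtain ⟨c⟩ : G.Colorable (Fintype.card V + Fintype.card V' + 1) :=
    G.colorable_of_fintype.mono (by omega)
  obtain ⟨α, hα⟩ := exists_forall_ne_of_card_lt (by simp) c
  obtain ⟨β, hβ⟩ := exists_forall_ne_of_card_lt (by simp) (ψ c)
  exact ⟨colGraph.isoOfIso ψ hα hβ⟩
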